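/- Fix an integer n ≥ 1. As operators on ℚ[[q]], the first two operators 𝔏_k defined via the rational functions H_{m,j} satisfy 𝔏₁ = n·Lⁿ·D + ((n−1)/2)·(Lⁿ−1) and 𝔏₂ = C(n,2)·Lⁿ·D² + C(n−1,2)·(Lⁿ−1)·D + ((n−1)(n−2)/(24n))·L^{−n}·((3n−5)·Lⁿ + n + 5)·(Lⁿ−1). -/

import Mathlib

/-- The operator `D = q·d/dq` on `ℚ[[q]]`. -/
noncomputable def Dq (f : PowerSeries ℚ) : PowerSeries ℚ :=
  PowerSeries.mk fun d => (d : ℚ) * PowerSeries.coeff (R := ℚ) d f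

/-- Formal derivative `d/du` on `ℚ(u)` via the quotient rule. -/
noncomputable def rderiv (r : RatFunc ℚ) : RatFunc ℚ :=
  algebraMap (Polynomial ℚ) (RatFunc ℚ)
      (Polynomial.derivative r.num * r.denom - r.num * Polynomial.derivative r.denom) /
    algebraMap (Polynomial ℚ) (RatFunc ℚ) (r.denom ^ 2)

/-- The rational functions `H_{m,j} ∈ ℚ(u)` with parameter `n`. -/
noncomputable def Hfun (n : ℕ) : ℕ → ℕ → RatFunc ℚ
  | 0, 0 => 1
  | 0, _ + 1 => 0
  | m + 1, 0 => Hfun n m 0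
  | m + 1, j + 1 =>
    if j + 1 ≤ m + 1 then
      Hfun n m (j + 1) +
        (RatFunc.X - 1) *
          (rderiv (Hfun n m j) +
            (((m : RatFunc ℚ) - (j : RatFunc ℚ)) / ((n : RatFunc ℚ) * RatFunc.X)) *
              Hfun n m j)
    else 0

/-- Evaluation of an element of `ℚ(u)` (whose denominator is a power of `u`)
at `u = Lⁿ = 1+q`, as an element of `ℚ[[q]]`. -/
noncomputable def evalRF (r : RatFunc ℚ) : PowerSeries ℚ :=
  Polynomial.aeval (1 + PowerSeries.X : PowerSeries ℚ) r.num *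
    (Polynomial.aeval (1 + PowerSeries.X : PowerSeries ℚ) r.denom)⁻¹

/-- The operator `𝔏_k = Lⁿ·Σ_{i=0}^{k} C(n,i)·H_{n−i,k−i}(Lⁿ)·D^i` on `ℚ[[q]]`. -/
noncomputable def frakL (n k : ℕ) (L f : PowerSeries ℚ) : PowerSeries ℚ :=
  L ^ n * ∑ i ∈ Finset.range (k + 1),
    PowerSeries.C (R := ℚ) (n.choose i : ℚ) * evalRF (Hfun n (n - i) (k - i)) * Dq^[i] f

/-! Induction on `m` in the recursion gives the closed forms `H_{m,0} = 1`,
`H_{m,1} = m(m-1)/(2n) · (u-1)/u` and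
`H_{m,2} = (m(m-1)(m-2)/(6n) · (u-1) + m(m-1)(m-2)(3m-5)/(24n²) · (u-1)²) / u²`.
At `u = Lⁿ = 1 + q` we have `u - 1 = q`, so the sums defining `𝔏₁` and `𝔏₂` become explicit
and reduce to the stated operators by comparing rational coefficients. -/

open Polynomial

local notation "am" => algebraMap ℚ[X] (RatFunc ℚ)

namespace RatFunc

lemma exists_eq_num_mul_and_eq_denom_mul {K : Type*} [Field K] {p q : K[X]} (hq : q ≠ 0) :
    ∃ g : K[X], g ≠ 0 ∧
      p = (algebraMap K[X] (RatFunc K) p / algebraMap K[X] (RatFunc K) q).num * g ∧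
      q = (algebraMap K[X] (RatFunc K) p / algebraMap K[X] (RatFunc K) q).denom * g := by
  set r : RatFunc K := algebraMap K[X] (RatFunc K) p / algebraMap K[X] (RatFunc K) q
  obtain ⟨g, hg⟩ : r.denom ∣ q := (denom_dvd hq).2 ⟨p, rfl⟩
  have hg0 : g ≠ 0 := by rintro rfl; exact hq (by rw [hg, mul_zero])
  refine ⟨g, hg0, ?_, hg⟩
  have hr : algebraMap K[X] (RatFunc K) r.num / algebraMap K[X] (RatFunc K) r.denom =
      algebraMap K[X] (RatFunc K) p / algebraMap K[X] (RatFunc K) q := num_div_denom r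
  rw [div_eq_div_iff (algebraMap_ne_zero r.denom_ne_zero) (algebraMap_ne_zero hq),
    ← map_mul, ← map_mul] at hr
  have hcross : r.num * q = p * r.denom := algebraMap_injective K hr
  rw [hg, mul_left_comm, mul_comm] at hcross
  exact (mul_right_cancel₀ r.denom_ne_zero hcross).symm

end RatFunc

lemma rderiv_algebraMap_div {p q : ℚ[X]} (hq : q ≠ 0) :
    rderiv (am p / am q) = am (derivative p * q - p * derivative q) / am (q ^ 2) := by
  obtain ⟨g, hg0, hp, hq'⟩ := RatFunc.exists_eq_num_mul_and_eq_denom_mul (p := p) hq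
  set r : RatFunc ℚ := am p / am q
  have hnum : derivative p * q - p * derivative q =
      (derivative r.num * r.denom - r.num * derivative r.denom) * g ^ 2 := by
    rw [hp, hq', derivative_mul, derivative_mul]; ring
  have hden : q ^ 2 = r.denom ^ 2 * g ^ 2 := by rw [hq']; ring
  rw [hnum, hden, rderiv, map_mul, map_mul,
    mul_div_mul_right _ _ (RatFunc.algebraMap_ne_zero (pow_ne_zero 2 hg0))]

lemma rderiv_one : rderiv 1 = 0 := by
  simp [rderiv]

lemma constantCoeff_aeval_one_add_X (p : ℚ[X]) :
    PowerSeries.constantCoeff (aeval (1 + PowerSeries.X : PowerSeries ℚ) p) = p.eval 1 := by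
  rw [aeval_def, hom_eval₂]
  simp [eval₂_eq_eval_map]

lemma evalRF_algebraMap_div {p q : ℚ[X]} (hq : q ≠ 0) (hq1 : q.eval 1 ≠ 0) :
    evalRF (am p / am q) =
      aeval (1 + PowerSeries.X : PowerSeries ℚ) p * (aeval (1 + PowerSeries.X) q)⁻¹ := by
  obtain ⟨g, -, hp, hq'⟩ := RatFunc.exists_eq_num_mul_and_eq_denom_mul (p := p) hq
  set r : RatFunc ℚ := am p / am q
  have hg : PowerSeries.constantCoeff (aeval (1 + PowerSeries.X : PowerSeries ℚ) g) ≠ 0 := by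
    rw [constantCoeff_aeval_one_add_X]
    exact right_ne_zero_of_mul (by rwa [hq', eval_mul] at hq1)
  rw [evalRF, hp, hq', map_mul, map_mul, PowerSeries.mul_inv_rev, mul_assoc, ← mul_assoc _ _⁻¹,
    PowerSeries.mul_inv_cancel _ hg, one_mul]

lemma evalRF_one : evalRF 1 = 1 := by
  simp [evalRF]

lemma Hfun_zero (n m : ℕ) : Hfun n m 0 = 1 := by
  induction m with
  | zero => rfl
  | succ m ih => rw [Hfun, ih]

lemma Hfun_one {n : ℕ} (hn : n ≠ 0) (m : ℕ) :
    Hfun n m 1 = am (Polynomial.C ((m : ℚ) * (m - 1) / (2 * n)) * (X - 1)) / am X := by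
  have : (n : RatFunc ℚ) ≠ 0 := Nat.cast_ne_zero.2 hn
  have := RatFunc.X_ne_zero (K := ℚ)
  induction m with
  | zero => simp [Hfun]
  | succ m ih =>
    rw [Hfun, if_pos (by omega), Hfun_zero, rderiv_one, ih]
    simp only [map_mul, map_sub, map_one, RatFunc.algebraMap_C, RatFunc.algebraMap_X, map_div₀,
      map_natCast, map_ofNat]
    push_cast
    field_simp
    ring

lemma rderiv_C_mul_X_sub_one_div_X (c : ℚ) :
    rderiv (am (Polynomial.C c * (X - 1)) / am X) = am (Polynomial.C c) / am (X ^ 2) := by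
  rw [rderiv_algebraMap_div X_ne_zero]
  simp only [derivative_mul, derivative_C, derivative_sub, derivative_X, derivative_one]
  ring_nf

lemma Hfun_two {n : ℕ} (hn : n ≠ 0) (m : ℕ) :
    Hfun n m 2 = am (Polynomial.C ((m : ℚ) * (m - 1) * (m - 2) / (6 * n)) * (X - 1) +
      Polynomial.C ((m : ℚ) * (m - 1) * (m - 2) * (3 * m - 5) / (24 * n ^ 2)) * (X - 1) ^ 2) /
        am (X ^ 2) := by
  have : (n : RatFunc ℚ) ≠ 0 := Nat.cast_ne_zero.2 hn
  have := RatFunc.X_ne_zero (K := ℚ)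
  induction m with
  | zero => simp [Hfun]
  | succ m ih =>
    rcases m with _ | m
    · simp [Hfun]
    rw [Hfun, if_pos (by omega), ih, Hfun_one hn, rderiv_C_mul_X_sub_one_div_X]
    simp only [map_add, map_mul, map_sub, map_one, map_pow, RatFunc.algebraMap_C,
      RatFunc.algebraMap_X, map_div₀, map_natCast, map_ofNat]
    push_cast
    field_simp
    ring

lemma evalRF_algebraMap_div_X_pow (p : ℚ[X]) (k : ℕ) :
    evalRF (am p / am (X ^ k)) =
      aeval (1 + PowerSeries.X : PowerSeries ℚ) p * ((1 + PowerSeries.X) ^ k)⁻¹ := by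
  rw [evalRF_algebraMap_div (pow_ne_zero k X_ne_zero) (by simp), map_pow, aeval_X]

lemma evalRF_Hfun_one {n : ℕ} (hn : n ≠ 0) (m : ℕ) :
    evalRF (Hfun n m 1) =
      PowerSeries.C ((m : ℚ) * (m - 1) / (2 * n)) * PowerSeries.X * (1 + PowerSeries.X)⁻¹ := by
  rw [Hfun_one hn, ← pow_one X, evalRF_algebraMap_div_X_pow]
  simp

lemma evalRF_Hfun_two {n : ℕ} (hn : n ≠ 0) (m : ℕ) :
    evalRF (Hfun n m 2) =
      (PowerSeries.C ((m : ℚ) * (m - 1) * (m - 2) / (6 * n)) * PowerSeries.X +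
        PowerSeries.C ((m : ℚ) * (m - 1) * (m - 2) * (3 * m - 5) / (24 * n ^ 2)) *
          PowerSeries.X ^ 2) * ((1 + PowerSeries.X) ^ 2)⁻¹ := by
  rw [Hfun_two hn, evalRF_algebraMap_div_X_pow]
  simp

lemma C_mul_evalRF_Hfun_pred_one {n : ℕ} (hn : n ≠ 0) :
    PowerSeries.C (n : ℚ) * evalRF (Hfun n (n - 1) 1) =
      PowerSeries.C ((n - 1).choose 2 : ℚ) * PowerSeries.X * (1 + PowerSeries.X)⁻¹ := by
  have hn' : (n : ℚ) ≠ 0 := Nat.cast_ne_zero.2 hn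
  have hc : (n : ℚ) * (((n - 1 : ℕ) : ℚ) * ((n - 1 : ℕ) - 1) / (2 * n)) =
      (n - 1).choose 2 := by
    rw [Nat.cast_choose_two, Nat.cast_sub (Nat.one_le_iff_ne_zero.2 hn)]
    field_simp
  rw [evalRF_Hfun_one hn, ← mul_assoc, ← mul_assoc, ← map_mul, hc]

lemma evalRF_Hfun_self_two {n : ℕ} (hn : n ≠ 0) :
    evalRF (Hfun n n 2) =
      PowerSeries.C (((n : ℚ) - 1) * ((n : ℚ) - 2) / (24 * (n : ℚ))) *
        (PowerSeries.C (3 * (n : ℚ) - 5) * (1 + PowerSeries.X) + PowerSeries.C ((n : ℚ) + 5)) *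
        PowerSeries.X * ((1 + PowerSeries.X) ^ 2)⁻¹ := by
  have hn' : (n : ℚ) ≠ 0 := Nat.cast_ne_zero.2 hn
  have hlin : (n : ℚ) * (n - 1) * (n - 2) / (6 * n) =
      (n - 1) * (n - 2) / (24 * n) * (3 * n - 5 + (n + 5)) := by
    field_simp
    ring
  have hquad : (n : ℚ) * (n - 1) * (n - 2) * (3 * n - 5) / (24 * n ^ 2) =
      (n - 1) * (n - 2) / (24 * n) * (3 * n - 5) := by
    field_simp
  rw [evalRF_Hfun_two hn, hlin, hquad]
  simp only [map_mul, map_add]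
  ring

lemma Dq_iterate_two (f : PowerSeries ℚ) : Dq^[2] f = Dq (Dq f) := rfl

lemma frakL_one {n : ℕ} (hn : n ≠ 0) {L : PowerSeries ℚ} (hLn : L ^ n = 1 + PowerSeries.X)
    (f : PowerSeries ℚ) :
    frakL n 1 L f =
      PowerSeries.C (n : ℚ) * L ^ n * Dq f +
        PowerSeries.C (((n : ℚ) - 1) / 2) * (L ^ n - 1) * f := by
  have hu : (1 + PowerSeries.X : PowerSeries ℚ) * (1 + PowerSeries.X)⁻¹ = 1 :=
    PowerSeries.mul_inv_cancel _ (by simp)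
  have hc : ((n : ℚ) * (n - 1) / (2 * n)) = (n - 1) / 2 := by field_simp
  rw [frakL, Finset.sum_range_succ, Finset.sum_range_one, Nat.sub_zero, Nat.sub_zero,
    Nat.sub_self, Hfun_zero, evalRF_one, evalRF_Hfun_one hn, hc, hLn]
  simp only [Nat.choose_zero_right, Nat.choose_one_right, Nat.cast_one, map_one,
    Function.iterate_zero, Function.iterate_one, id]
  linear_combination (PowerSeries.C (((n : ℚ) - 1) / 2) * PowerSeries.X * f) * hu

lemma frakL_two {n : ℕ} (hn : n ≠ 0) {L : PowerSeries ℚ} (hLn : L ^ n = 1 + PowerSeries.X)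
    (f : PowerSeries ℚ) :
    frakL n 2 L f =
      PowerSeries.C (n.choose 2 : ℚ) * L ^ n * Dq (Dq f) +
        PowerSeries.C ((n - 1).choose 2 : ℚ) * (L ^ n - 1) * Dq f +
        PowerSeries.C (((n : ℚ) - 1) * ((n : ℚ) - 2) / (24 * (n : ℚ))) * (L ^ n)⁻¹ *
          (PowerSeries.C (3 * (n : ℚ) - 5) * L ^ n + PowerSeries.C ((n : ℚ) + 5)) *
          (L ^ n - 1) * f := by
  rw [frakL, Finset.sum_range_succ, Finset.sum_range_succ, Finset.sum_range_one, Nat.sub_zero,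
    Nat.sub_zero, Nat.sub_self, Hfun_zero, evalRF_one, Nat.choose_one_right,
    mul_assoc (PowerSeries.C _), C_mul_evalRF_Hfun_pred_one hn, evalRF_Hfun_self_two hn,
    Dq_iterate_two, hLn, sq (1 + PowerSeries.X), PowerSeries.mul_inv_rev]
  simp only [Nat.choose_zero_right, Nat.cast_one, map_one, Function.iterate_zero,
    Function.iterate_one, id]
  set u : PowerSeries ℚ := 1 + PowerSeries.X
  have hu : u * u⁻¹ = 1 := PowerSeries.mul_inv_cancel _ (by simp [u])
  linear_combination
    (u⁻¹ * PowerSeries.C (((n : ℚ) - 1) * ((n : ℚ) - 2) / (24 * (n : ℚ))) *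
        (PowerSeries.C (3 * (n : ℚ) - 5) * u + PowerSeries.C ((n : ℚ) + 5)) * PowerSeries.X * f +
      PowerSeries.C ((n - 1).choose 2 : ℚ) * PowerSeries.X * Dq f) * hu

theorem stmt_5_general (n : ℕ) (hn : 1 ≤ n) (L : PowerSeries ℚ)
    (hLn : L ^ n = 1 + PowerSeries.X) :
    ∀ f : PowerSeries ℚ,
      frakL n 1 L f =
        PowerSeries.C (R := ℚ) (n : ℚ) * L ^ n * Dq f +
          PowerSeries.C (R := ℚ) (((n : ℚ) - 1) / 2) * (L ^ n - 1) * f ∧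
      frakL n 2 L f =
        PowerSeries.C (R := ℚ) (n.choose 2 : ℚ) * L ^ n * Dq (Dq f) +
          PowerSeries.C (R := ℚ) ((n - 1).choose 2 : ℚ) * (L ^ n - 1) * Dq f +
          PowerSeries.C (R := ℚ) (((n : ℚ) - 1) * ((n : ℚ) - 2) / (24 * (n : ℚ))) * (L ^ n)⁻¹ *
            (PowerSeries.C (R := ℚ) (3 * (n : ℚ) - 5) * L ^ n + PowerSeries.C (R := ℚ) ((n : ℚ) + 5)) *
            (L ^ n - 1) * f := by
  have hn0 : n ≠ 0 := Nat.one_le_iff_ne_zero.mp hn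
  exact fun f => ⟨frakL_one hn0 hLn f, frakL_two hn0 hLn f⟩

/-- `𝔏₁ = n·Lⁿ·D + ((n−1)/2)·(Lⁿ−1)` and
`𝔏₂ = C(n,2)·Lⁿ·D² + C(n−1,2)·(Lⁿ−1)·D
  + ((n−1)(n−2)/(24n))·L^{−n}·((3n−5)·Lⁿ + n + 5)·(Lⁿ−1)`,
as operators on `ℚ[[q]]`, where `L` is the unique power series with constant
term `1` and `Lⁿ = 1+q`. -/
theorem stmt_5 (n : ℕ) (hn : 1 ≤ n) (L : PowerSeries ℚ)
    (hL0 : PowerSeries.constantCoeff (R := ℚ) L = 1) (hLn : L ^ n = 1 + PowerSeries.X) :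
    ∀ f : PowerSeries ℚ,
      frakL n 1 L f =
        PowerSeries.C (R := ℚ) (n : ℚ) * L ^ n * Dq f +
          PowerSeries.C (R := ℚ) (((n : ℚ) - 1) / 2) * (L ^ n - 1) * f ∧
      frakL n 2 L f =
        PowerSeries.C (R := ℚ) (n.choose 2 : ℚ) * L ^ n * Dq (Dq f) +
          PowerSeries.C (R := ℚ) ((n - 1).choose 2 : ℚ) * (L ^ n - 1) * Dq f +
          PowerSeries.C (R := ℚ) (((n : ℚ) - 1) * ((n : ℚ) - 2) / (24 * (n : ℚ))) * (L ^ n)⁻¹ *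
            (PowerSeries.C (R := ℚ) (3 * (n : ℚ) - 5) * L ^ n + PowerSeries.C (R := ℚ) ((n : ℚ) + 5)) *
            (L ^ n - 1) * f :=
  stmt_5_general n hn L hLn
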